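/- A finite sequence π of distinct keys from a linear order is equal to Preorder(T) for some binary search tree T if and only if π avoids the pattern (2,3,1), i.e., there are no indices i < j < k such that π_k < π_i < π_j. -/

import Mathlib

/-- Binary trees with keys at internal nodes. -/
inductive BT (α : Type) where
  | leaf : BT α
  | node : BT α → α → BT α → BT α
deriving DecidableEq

namespace BT

variable {α : Type} [LinearOrder α]

/-- The list of keys of a tree, in symmetric (inorder) order. -/
def keys : BT α → List α
  | leaf => []
  | node l v r => keys l ++ v :: keys r

/-- The number of nodes of a tree. -/
def size : BT α → ℕ
  | leaf => 0
  | node l _ r => size l + size r + 1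

/-- The symmetric-order (binary search tree) property. -/
def IsBST : BT α → Prop
  | leaf => True
  | node l v r => (∀ x ∈ l.keys, x < v) ∧ (∀ x ∈ r.keys, v < x) ∧ l.IsBST ∧ r.IsBST

/-- Preorder of a binary tree: root, then left subtree, then right subtree. -/
def preorder : BT α → List α
  | leaf => []
  | node l v r => v :: (preorder l ++ preorder r)

/-- Postorder of a binary tree: left subtree, right subtree, then root. -/
def postorder : BT α → List α
  | leaf => []
  | node l v r => postorder l ++ postorder r ++ [v]

/-- Reversed preorder: root, then right subtree, then left subtree
(the preorder of the mirror image). -/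
def revPreorder : BT α → List α
  | leaf => []
  | node l v r => v :: (revPreorder r ++ revPreorder l)

/-- Standard leaf insertion into a binary search tree. -/
def insertKey : BT α → α → BT α
  | leaf, x => node leaf x leaf
  | node l v r, x =>
    if x < v then node (insertKey l x) v r
    else if v < x then node l v (insertKey r x)
    else node l v r

/-- The depth (number of edges from the root) of the node with key `x`,
located by binary search. -/
def depthOf : BT α → α → ℕ
  | leaf, _ => 0
  | node l v r, x =>
    if x < v then depthOf l x + 1
    else if v < x then depthOf r x + 1
    else 0

/-- The search path to the key `x`: `false` records a step to a left child,
`true` a step to a right child. -/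
def pathTo : BT α → α → List Bool
  | leaf, _ => []
  | node l v r, x =>
    if x < v then false :: pathTo l x
    else if v < x then true :: pathTo r x
    else []

/-- The left-depth of the node with key `x`: the number of left-child edges
on the path from the root to it. -/
def leftDepthKey : BT α → α → ℕ
  | leaf, _ => 0
  | node l v r, x =>
    if x < v then leftDepthKey l x + 1
    else if v < x then leftDepthKey r x
    else 0

/-- The subtree rooted at the node with key `x` (empty if `x` is absent). -/
def subtreeAt : BT α → α → BT α
  | leaf, _ => leaf
  | node l v r, x =>
    if x < v then subtreeAt l x
    else if v < x then subtreeAt r x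
    else node l v r

/-- The key at the root, if any. -/
def rootKey : BT α → Option α
  | leaf => none
  | node _ v _ => some v

/-- The key of the parent of the node with key `x`, if any. -/
def parentKey : BT α → α → Option α
  | leaf, _ => none
  | node l v r, x =>
    if x < v then (if l.rootKey = some x then some v else l.parentKey x)
    else if v < x then (if r.rootKey = some x then some v else r.parentKey x)
    else none

/-- A step of the context (zipper) describing the search path from the root
to the current subtree: `inL v r` means the current subtree is the left child
of a node with key `v` and right subtree `r`; `inR l v` means it is the right
child of a node with key `v` and left subtree `l`. -/
inductive Ctx (α : Type) where
  | inL : α → BT α → Ctx α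
  | inR : BT α → α → Ctx α

/-- Descend along the search path for `x`, recording the context.
The head of the returned list corresponds to the immediate parent. -/
def descend : BT α → α → List (Ctx α) → List (Ctx α) × BT α
  | leaf, _, acc => (acc, leaf)
  | node l v r, x, acc =>
    if x < v then descend l x (Ctx.inL v r :: acc)
    else if v < x then descend r x (Ctx.inR l v :: acc)
    else (acc, node l v r)

/-- Reattach a subtree into its context, with no rotations. -/
def rebuild : BT α → List (Ctx α) → BT α
  | t, [] => t
  | t, Ctx.inL v r :: cs => rebuild (node t v r) cs
  | t, Ctx.inR l v :: cs => rebuild (node l v t) cs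

/-- Bottom-up splay steps: repeatedly apply zig / zig-zig / zig-zag steps to
the current subtree (rooted at the node being splayed) until the context is
exhausted. -/
def splayLoop : BT α → List (Ctx α) → BT α
  | t, [] => t
  | node a x b, [Ctx.inL v r] => node a x (node b v r)          -- zig
  | node a x b, [Ctx.inR l v] => node (node l v a) x b          -- zig
  | node a x b, Ctx.inL p pr :: Ctx.inL g gr :: cs =>           -- zig-zig
      splayLoop (node a x (node b p (node pr g gr))) cs
  | node a x b, Ctx.inL p pr :: Ctx.inR gl g :: cs =>           -- zig-zag
      splayLoop (node (node gl g a) x (node b p pr)) cs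
  | node a x b, Ctx.inR pl p :: Ctx.inR gl g :: cs =>           -- zig-zig
      splayLoop (node (node (node gl g pl) p a) x b) cs
  | node a x b, Ctx.inR pl p :: Ctx.inL g gr :: cs =>           -- zig-zag
      splayLoop (node (node pl p a) x (node b g gr)) cs
  | leaf, cs => rebuild leaf cs   -- unreachable when the splayed key is present

/-- Splaying the key `x`: if `x` occurs in the tree, bring its node to the
root by bottom-up splay steps; otherwise leave the tree unchanged. -/
def splay (x : α) (t : BT α) : BT α :=
  match descend t x [] with
  | (_, leaf) => t
  | (cs, found) => splayLoop found cs

/-- `α`-weight-balance in the sense of Nievergelt–Reingold: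
at each node, `min(|L|,|R|) + 1 ≥ α * (|x| + 1)`. -/
def WeightBalanced (a : ℝ) : BT α → Prop
  | leaf => True
  | node l _ r =>
      (min l.size r.size + 1 : ℝ) ≥ a * ((l.size + r.size + 1 : ℕ) + 1 : ℝ) ∧
      WeightBalanced a l ∧ WeightBalanced a r

/-- The rank of `x` in `t`: the number of keys of `t` that are `≤ x`. -/
def rank (t : BT α) (x : α) : ℕ := (t.keys.filter (fun y => y ≤ x)).length

end BT

section Defs

variable {α : Type} [LinearOrder α]

/-- The insertion tree of a sequence: leaf-insert the keys in order. -/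
def bstOf (π : List α) : BT α := π.foldl BT.insertKey BT.leaf

/-- `q` is a sub-root: a node of `t` not yet touched whose parent is touched,
where `touched` is the list of touched keys. -/
def IsSubRoot (t : BT α) (touched : List α) (q : α) : Prop :=
  q ∈ t.keys ∧ q ∉ touched ∧ ∃ p, t.parentKey q = some p ∧ p ∈ touched

/-- π avoids the pattern (2,3,1). -/
def Avoids231 (π : List α) : Prop :=
  ¬ ∃ i j k : Fin π.length, i < j ∧ j < k ∧ π.get k < π.get i ∧ π.get i < π.get j

/-- π avoids the pattern (3,1,2). -/
def Avoids312 (π : List α) : Prop :=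
  ¬ ∃ i j k : Fin π.length, i < j ∧ j < k ∧ π.get j < π.get k ∧ π.get k < π.get i

/-- π avoids the pattern (2,1,3). -/
def Avoids213 (π : List α) : Prop :=
  ¬ ∃ i j k : Fin π.length, i < j ∧ j < k ∧ π.get j < π.get i ∧ π.get i < π.get k

/-- π contains a strictly decreasing subsequence of length `k`. -/
def HasDecreasingSubseq (π : List α) (k : ℕ) : Prop :=
  ∃ s : List α, s.Sublist π ∧ s.length = k ∧ s.Chain' (· > ·)

/-- Splay the keys of a list in order, starting from `t`. -/
def splaySeq (π : List α) (t : BT α) : BT α := π.foldl (fun s x => BT.splay x s) t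

/-- The cost of splaying a sequence of keys starting from `t`:
each splay costs the current depth of the requested key plus one. -/
def splayCost : BT α → List α → ℕ
  | _, [] => 0
  | t, x :: xs => (t.depthOf x + 1) + splayCost (BT.splay x t) xs

/-- The cost of insertion splaying a sequence of keys starting from `t`:
each key is leaf-inserted, then the new node is splayed, at a cost of
its depth after insertion plus one. -/
def insertSplayCost : BT α → List α → ℕ
  | _, [] => 0
  | t, x :: xs =>
    ((t.insertKey x).depthOf x + 1) + insertSplayCost (BT.splay x (t.insertKey x)) xs

/-- `DF rk xs` = Σ_{i≥2} log₂(|rk(x_i) − rk(x_{i−1})| + 1). -/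
noncomputable def DF (rk : α → ℕ) (xs : List α) : ℝ :=
  ((xs.zip xs.tail).map
    (fun p => Real.logb 2 (|(rk p.2 : ℝ) - (rk p.1 : ℝ)| + 1))).sum

/-- The rank of `x` within the sequence `σ` itself. -/
def rankIn (σ : List α) (x : α) : ℕ := (σ.filter (fun y => y ≤ x)).length

/-- The dynamic-finger sum of a sequence, with ranks computed in the
sequence itself. -/
noncomputable def DFseq (σ : List α) : ℝ := DF (rankIn σ) σ

end Defs

/-! In a binary search tree the preorder is `v :: (preorder l ++ preorder r)`, with every key
of `l` below `v` and every key of `r` above it; so a 231 pattern can neither start at `v` nor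
straddle the two blocks, and by induction it lies in neither block. Conversely, if `v :: rest`
avoids 231 then no key below `v` follows a key above `v`, so `rest` splits into the keys below `v`
followed by the keys above `v`; by induction both blocks are preorders of search trees, which
become the subtrees of `v`. -/

theorem List.mem_or_mem_of_pair_sublist_append {β : Type} {x y : β} {L R : List β}
    (h : [x, y].Sublist (L ++ R)) : x ∈ L ∨ y ∈ R := by
  obtain ⟨l₁, l₂, he, h₁, h₂⟩ := List.sublist_append_iff.1 h
  rcases l₁ with _ | ⟨z, l₁⟩
  · simp only [List.nil_append] at he
    exact .inr (h₂.subset (by simp [← he]))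
  · simp only [List.cons_append, List.cons.injEq] at he
    exact .inl (h₁.subset (by simp [he.1]))

theorem List.not_of_mem_dropWhile {β : Type} {p : β → Bool} {l : List β}
    (hl : l.Pairwise fun a b => p a = false → p b = false) {x : β}
    (hx : x ∈ l.dropWhile p) : p x = false := by
  induction l with
  | nil => simp at hx
  | cons a l ih =>
    rw [List.pairwise_cons] at hl
    by_cases hpa : p a
    · rw [List.dropWhile_cons_of_pos hpa] at hx
      exact ih hl.2 hx
    · rw [List.dropWhile_cons_of_neg hpa] at hx
      rw [Bool.not_eq_true] at hpa
      rcases List.mem_cons.1 hx with rfl | hx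
      · exact hpa
      · exact hl.1 x hx hpa

theorem BT.preorder_perm_keys {α : Type} (t : BT α) : t.preorder.Perm t.keys := by
  induction t with
  | leaf => rfl
  | node l v r ihl ihr => exact ((ihl.append ihr).cons v).trans List.perm_middle.symm

section Pattern231

variable {α : Type} [LinearOrder α]

def Contains231 (π : List α) : Prop := ∃ a b c, [a, b, c].Sublist π ∧ c < a ∧ a < b

theorem avoids231_iff_not_contains231 {π : List α} : Avoids231 π ↔ ¬Contains231 π := by
  refine not_congr ⟨?_, ?_⟩
  · rintro ⟨i, j, k, hij, hjk, hki, hij'⟩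
    refine ⟨π.get i, π.get j, π.get k, ?_, hki, hij'⟩
    simpa using List.map_getElem_sublist (is := [i, j, k]) (by simp [hij, hjk, hij.trans hjk])
  · rintro ⟨a, b, c, h, hca, hab⟩
    obtain ⟨is, he, hp⟩ := List.sublist_eq_map_getElem h
    match is, he, hp with
    | [i, j, k], he, hp =>
      simp only [Fin.getElem_fin, List.map_cons, List.map_nil, List.cons.injEq, and_true,
        List.pairwise_cons, List.mem_cons, List.not_mem_nil, or_false, forall_eq_or_imp,
        forall_eq, IsEmpty.forall_iff, implies_true, List.Pairwise.nil, and_self] at he hp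
      obtain ⟨rfl, rfl, rfl⟩ := he
      exact ⟨i, j, k, hp.1.1, hp.2, hca, hab⟩

theorem Contains231.mono {s π : List α} (hs : s.Sublist π) : Contains231 s → Contains231 π :=
  fun ⟨a, b, c, h, hca, hab⟩ => ⟨a, b, c, h.trans hs, hca, hab⟩

theorem contains231_cons {v : α} {l : List α} :
    Contains231 (v :: l) ↔ Contains231 l ∨ ∃ b c, [b, c].Sublist l ∧ c < v ∧ v < b := by
  simp only [Contains231, List.sublist_cons_iff, List.cons.injEq]
  constructor
  · rintro ⟨a, b, c, h | ⟨r, ⟨rfl, rfl⟩, h⟩, hca, hab⟩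
    · exact .inl ⟨a, b, c, h, hca, hab⟩
    · exact .inr ⟨b, c, h, hca, hab⟩
  · rintro (⟨a, b, c, h, hca, hab⟩ | ⟨b, c, h, hcv, hvb⟩)
    · exact ⟨a, b, c, .inl h, hca, hab⟩
    · exact ⟨v, b, c, .inr ⟨_, ⟨rfl, rfl⟩, h⟩, hcv, hvb⟩

theorem contains231_append {L R : List α} (hLR : ∀ x ∈ L, ∀ y ∈ R, x < y) :
    Contains231 (L ++ R) ↔ Contains231 L ∨ Contains231 R := by
  refine ⟨?_, fun h => h.elim (.mono (List.sublist_append_left L R))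
    (.mono (List.sublist_append_right L R))⟩
  rintro ⟨a, b, c, h, hca, hab⟩
  obtain ⟨l₁, l₂, he, h₁, h₂⟩ := List.sublist_append_iff.1 h
  have hac : ¬ (a ∈ L ∧ c ∈ R) := fun ⟨ha, hc⟩ => (hLR a ha c hc).not_gt hca
  rcases l₁ with _ | ⟨z, _ | ⟨y, _ | ⟨w, l₁⟩⟩⟩ <;>
    simp only [List.cons_append, List.nil_append, List.cons.injEq] at he
  · exact .inr ⟨a, b, c, he ▸ h₂, hca, hab⟩
  · obtain ⟨rfl, rfl⟩ := he
    exact (hac ⟨h₁.subset (by simp), h₂.subset (by simp)⟩).elim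
  · obtain ⟨rfl, rfl, rfl⟩ := he
    exact (hac ⟨h₁.subset (by simp), h₂.subset (by simp)⟩).elim
  · obtain ⟨rfl, rfl, rfl, hnil⟩ := he
    obtain ⟨rfl, rfl⟩ := List.append_eq_nil_iff.1 hnil.symm
    exact .inl ⟨a, b, c, h₁, hca, hab⟩

theorem BT.IsBST.not_contains231_preorder {t : BT α} (ht : t.IsBST) :
    ¬Contains231 t.preorder := by
  induction t with
  | leaf => rintro ⟨a, b, c, h, -⟩; simp [BT.preorder] at h
  | node l v r ihl ihr =>
    obtain ⟨hl, hr, hbl, hbr⟩ := ht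
    replace hl : ∀ x ∈ l.preorder, x < v := fun x hx => hl x (l.preorder_perm_keys.subset hx)
    replace hr : ∀ x ∈ r.preorder, v < x := fun x hx => hr x (r.preorder_perm_keys.subset hx)
    rw [BT.preorder, contains231_cons,
      contains231_append fun x hx y hy => (hl x hx).trans (hr y hy)]
    rintro ((h | h) | ⟨b, c, hbc, hcv, hvb⟩)
    · exact ihl hbl h
    · exact ihr hbr h
    · rcases List.mem_or_mem_of_pair_sublist_append hbc with hb | hc
      · exact (hl b hb).not_gt hvb
      · exact (hr c hc).not_gt hcv

theorem exists_append_of_not_contains231_cons {v : α} {l : List α} (hv : v ∉ l)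
    (h : ¬Contains231 (v :: l)) :
    ∃ L R, l = L ++ R ∧ (∀ x ∈ L, x < v) ∧ ∀ x ∈ R, v < x := by
  refine ⟨l.takeWhile (· < v), l.dropWhile (· < v), List.takeWhile_append_dropWhile.symm,
    fun x hx => by simpa using List.mem_takeWhile_imp hx, fun x hx => ?_⟩
  have hsorted : l.Pairwise fun a b => decide (a < v) = false → decide (b < v) = false := by
    refine List.pairwise_iff_forall_sublist.2 fun {a b} hab hav => ?_
    have hva : v < a :=
      lt_of_le_of_ne (by simpa using hav) fun hva => hv (hva ▸ hab.subset (by simp))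
    simpa using fun hbv => h (contains231_cons.2 (.inr ⟨a, b, hab, hbv, hva⟩))
  have hxv : v ≤ x := by simpa using List.not_of_mem_dropWhile hsorted hx
  exact lt_of_le_of_ne hxv fun hvx => hv (hvx ▸ (List.dropWhile_sublist _).subset hx)

theorem exists_isBST_preorder_eq_of_not_contains231 :
    ∀ {π : List α}, π.Nodup → ¬Contains231 π → ∃ T : BT α, T.IsBST ∧ T.preorder = π
  | [], _, _ => ⟨.leaf, trivial, rfl⟩
  | v :: l, hnd, h => by
    obtain ⟨hv, hnd⟩ := List.nodup_cons.1 hnd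
    obtain ⟨L, R, rfl, hL, hR⟩ := exists_append_of_not_contains231_cons hv h
    obtain ⟨TL, hTL, hTLpre⟩ := exists_isBST_preorder_eq_of_not_contains231
      (hnd.sublist (List.sublist_append_left L R))
      (fun hc => h (hc.mono ((List.sublist_append_left L R).cons v)))
    obtain ⟨TR, hTR, hTRpre⟩ := exists_isBST_preorder_eq_of_not_contains231
      (hnd.sublist (List.sublist_append_right L R))
      (fun hc => h (hc.mono ((List.sublist_append_right L R).cons v)))
    refine ⟨.node TL v TR, ⟨fun x hx => hL x ?_, fun x hx => hR x ?_, hTL, hTR⟩, ?_⟩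
    · exact hTLpre ▸ TL.preorder_perm_keys.symm.subset hx
    · exact hTRpre ▸ TR.preorder_perm_keys.symm.subset hx
    · rw [BT.preorder, hTLpre, hTRpre]
termination_by π => π.length

end Pattern231

/-- A sequence of distinct keys is the preorder of some binary search tree
iff it avoids the pattern (2,3,1). -/
theorem preorder_iff_avoids231 {α : Type} [LinearOrder α]
    (π : List α) (hnd : π.Nodup) :
    (∃ T : BT α, T.IsBST ∧ T.preorder = π) ↔ Avoids231 π := by
  rw [avoids231_iff_not_contains231]
  exact ⟨fun ⟨T, hT, hTπ⟩ => hTπ ▸ hT.not_contains231_preorder,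
    exists_isBST_preorder_eq_of_not_contains231 hnd⟩
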